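/- arXiv:2405.18342 — 2 statements merged into one kernel-verified Lean document; each statement's English description precedes it below -/
import Mathlib

section
/- Let λ > 0, let 0 < ξ⁻ < ξ⁰ < ξ⁺ < 1, and let γ⁻ > 0, γ⁺ > 0 with γ⁻ + γ⁺ ≤ 1. Then γ⁻·(sinh(√λ·ξ⁻)/sinh(√λ·ξ⁰)) + γ⁺·(sinh(√λ·(ξ⁺ − 1))/sinh(√λ·(ξ⁰ − 1))) < 1; in particular the quantity 1 − γ⁻·(sinh(√λ·ξ⁻)/sinh(√λ·ξ⁰)) − γ⁺·(sinh(√λ·(ξ⁺ − 1))/sinh(√λ·(ξ⁰ − 1))) is strictly positive. -/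
/-- The key inequality guaranteeing solvability of the equation for
the Fourier coefficients `Φ_k` of the trace on the contact line. -/
theorem stmt_3 (lam ξm ξ0 ξp γm γp : ℝ) (hlam : 0 < lam)
    (hξm0 : 0 < ξm) (hξm : ξm < ξ0) (hξp : ξ0 < ξp) (hξp1 : ξp < 1)
    (hγm : 0 < γm) (hγp : 0 < γp) (hsum : γm + γp ≤ 1) :
    γm * (Real.sinh (Real.sqrt lam * ξm) / Real.sinh (Real.sqrt lam * ξ0))
      + γp * (Real.sinh (Real.sqrt lam * (ξp - 1)) /
          Real.sinh (Real.sqrt lam * (ξ0 - 1))) < 1 ∧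
    0 < 1 - γm * (Real.sinh (Real.sqrt lam * ξm) / Real.sinh (Real.sqrt lam * ξ0))
      - γp * (Real.sinh (Real.sqrt lam * (ξp - 1)) /
          Real.sinh (Real.sqrt lam * (ξ0 - 1))) := by
  set s := Real.sqrt lam with hs
  have hspos : 0 < s := Real.sqrt_pos.mpr hlam
  have h1 : Real.sinh (s * ξm) / Real.sinh (s * ξ0) < 1 := by
    rw [div_lt_one (Real.sinh_pos_iff.mpr (by nlinarith))]
    exact Real.sinh_lt_sinh.mpr (by nlinarith)
  have key : Real.sinh (s * (ξp - 1)) / Real.sinh (s * (ξ0 - 1))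
      = Real.sinh (s * (1 - ξp)) / Real.sinh (s * (1 - ξ0)) := by
    rw [show s * (ξp - 1) = -(s * (1 - ξp)) by ring,
      show s * (ξ0 - 1) = -(s * (1 - ξ0)) by ring, Real.sinh_neg, Real.sinh_neg,
      neg_div_neg_eq]
  have h2 : Real.sinh (s * (ξp - 1)) / Real.sinh (s * (ξ0 - 1)) < 1 := by
    rw [key, div_lt_one (Real.sinh_pos_iff.mpr (by nlinarith))]
    exact Real.sinh_lt_sinh.mpr (by nlinarith)
  have a1 := mul_lt_mul_of_pos_left h1 hγm
  have a2 := mul_lt_mul_of_pos_left h2 hγp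
  constructor <;> linarith
end

section
/- Let λ > 0, 0 < ξ⁻ < ξ⁰ < ξ⁺ < 1, γ⁻ > 0, γ⁺ > 0 with γ⁻ + γ⁺ ≤ 1, let f⁻ be continuous on [0, ξ⁰], f⁺ continuous on [ξ⁰, 1], and let φ₀ ∈ ℝ. For Φ ∈ ℝ set I⁻ = (1/√λ)·∫₀^{ξ⁰} sinh(√λ·(ξ⁰ − s))·f⁻(s) ds, I⁺ = (1/√λ)·∫_{ξ⁰}^{1} sinh(√λ·(1 − s))·f⁺(s) ds, a⁻_Φ(x) = ((Φ − I⁻)·sinh(√λ·x))/sinh(√λ·ξ⁰) + (1/√λ)·∫₀ˣ sinh(√λ·(x − s))·f⁻(s) ds, and a⁺_Φ(x) = (Φ·sinh(√λ·(x − 1)) − I⁺·sinh(√λ·(x − ξ⁰)))/sinh(√λ·(ξ⁰ − 1)) + (1/√λ)·∫_{ξ⁰}^{x} sinh(√λ·(x − s))·f⁺(s) ds. Then there exists exactly one Φ ∈ ℝ satisfying the nonlocal contact relation Φ = γ⁻·a⁻_Φ(ξ⁻) + γ⁺·a⁺_Φ(ξ⁺) + φ₀. -/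
/-- There is exactly one value `Φ` satisfying the nonlocal contact
relation `Φ = γ⁻·a⁻_Φ(ξ⁻) + γ⁺·a⁺_Φ(ξ⁺) + φ₀`, where `a⁻_Φ` and `a⁺_Φ` are the
explicit solutions of the two auxiliary boundary value problems. -/
theorem stmt_4 (lam ξm ξ0 ξp γm γp φ0 : ℝ) (hlam : 0 < lam)
    (hξm0 : 0 < ξm) (hξm : ξm < ξ0) (hξp : ξ0 < ξp) (hξp1 : ξp < 1)
    (hγm : 0 < γm) (hγp : 0 < γp) (hsum : γm + γp ≤ 1)
    (fm fp : ℝ → ℝ)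
    (hfm : ContinuousOn fm (Set.Icc 0 ξ0)) (hfp : ContinuousOn fp (Set.Icc ξ0 1))
    (Im Ip : ℝ)
    (hIm : Im = (1 / Real.sqrt lam) *
      ∫ s in (0:ℝ)..ξ0, Real.sinh (Real.sqrt lam * (ξ0 - s)) * fm s)
    (hIp : Ip = (1 / Real.sqrt lam) *
      ∫ s in ξ0..(1:ℝ), Real.sinh (Real.sqrt lam * (1 - s)) * fp s)
    (am ap : ℝ → ℝ → ℝ)
    (ham : ∀ Φ x, am Φ x =
      ((Φ - Im) * Real.sinh (Real.sqrt lam * x)) / Real.sinh (Real.sqrt lam * ξ0)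
      + (1 / Real.sqrt lam) *
        ∫ s in (0:ℝ)..x, Real.sinh (Real.sqrt lam * (x - s)) * fm s)
    (hap : ∀ Φ x, ap Φ x =
      (Φ * Real.sinh (Real.sqrt lam * (x - 1))
        - Ip * Real.sinh (Real.sqrt lam * (x - ξ0))) / Real.sinh (Real.sqrt lam * (ξ0 - 1))
      + (1 / Real.sqrt lam) *
        ∫ s in ξ0..x, Real.sinh (Real.sqrt lam * (x - s)) * fp s) :
    ∃! Φ : ℝ, Φ = γm * am Φ ξm + γp * ap Φ ξp + φ0 := by
  have hs : 0 < Real.sqrt lam := Real.sqrt_pos.mpr hlam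
  set σ := Real.sqrt lam with hσ
  set Sm := Real.sinh (σ * ξm) with hSm
  set S0 := Real.sinh (σ * ξ0) with hS0
  set Sp := Real.sinh (σ * (ξp - 1)) with hSp
  set S1 := Real.sinh (σ * (ξ0 - 1)) with hS1
  set k := γm * (Sm / S0) + γp * (Sp / S1) with hk
  set c := γm * ((0 - Im) * Sm / S0
      + (1 / σ) * ∫ s in (0:ℝ)..ξm, Real.sinh (σ * (ξm - s)) * fm s)
    + γp * ((0 * Sp - Ip * Real.sinh (σ * (ξp - ξ0))) / S1
      + (1 / σ) * ∫ s in ξ0..ξp, Real.sinh (σ * (ξp - s)) * fp s) + φ0 with hc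
  have key : ∀ Φ, γm * am Φ ξm + γp * ap Φ ξp + φ0 = k * Φ + c := by
    intro Φ
    rw [ham, hap, hk, hc]
    ring
  have hS0pos : 0 < S0 := Real.sinh_pos_iff.mpr (mul_pos hs (by linarith))
  have hSmlt : Sm < S0 := Real.sinh_lt_sinh.mpr (by nlinarith)
  have hS1neg : S1 < 0 := Real.sinh_neg_iff.mpr (by nlinarith)
  have hSplt : S1 < Sp := Real.sinh_lt_sinh.mpr (by nlinarith)
  have hA : Sm / S0 < 1 := (div_lt_one hS0pos).mpr hSmlt
  have hB : Sp / S1 < 1 := by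
    rw [div_lt_one_of_neg hS1neg]
    exact hSplt
  have hk1 : k < 1 := by
    have : k < γm + γp := by
      have h1 : γm * (Sm / S0) < γm := by nlinarith
      have h2 : γp * (Sp / S1) < γp := by nlinarith
      rw [hk]; linarith
    linarith
  have hne : (1 : ℝ) - k ≠ 0 := by linarith
  refine ⟨c / (1 - k), ?_, ?_⟩
  · show c / (1 - k) = γm * am (c / (1 - k)) ξm + γp * ap (c / (1 - k)) ξp + φ0
    rw [key]
    field_simp
    ring
  · intro Φ hΦ
    rw [key] at hΦ
    field_simp
    linarith [hΦ]
end
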